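/- Let R be a commutative ring, z ∈ R, and let K be a bounded cochain complex of R-modules such that multiplication by z is injective on each term K^n and on each cohomology module H^n(K). Then for every n the map H^n(K)/z·H^n(K) → H^n(K/zK) induced by the termwise quotient chain map K → K/zK (equivalently, the natural map H^n(K) ⊗_R R/(z) → H^n(K ⊗_R R/(z))) is an isomorphism. -/

import Mathlib

open CategoryTheory

/-- The submodule `z·M` of a module `M`, i.e. the range of multiplication by `z`. -/
noncomputable def zSMulRange {R : Type*} [CommRing R] (z : R) (M : ModuleCat R) :
    Submodule R M :=
  LinearMap.range (z • (LinearMap.id : M →ₗ[R] M))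

theorem modz_le {R : Type*} [CommRing R] (z : R) (K : CochainComplex (ModuleCat R) ℤ)
    (i j : ℤ) :
    zSMulRange z (K.X i) ≤ (zSMulRange z (K.X j)).comap (K.d i j).hom := by
  rintro x ⟨y, rfl⟩
  exact ⟨(K.d i j).hom y, by simp⟩

/-- The termwise quotient complex `K/zK` of a cochain complex of `R`-modules. -/
noncomputable def modz {R : Type*} [CommRing R] (z : R)
    (K : CochainComplex (ModuleCat R) ℤ) : CochainComplex (ModuleCat R) ℤ where
  X n := ModuleCat.of R (K.X n ⧸ zSMulRange z (K.X n))
  d i j := ModuleCat.ofHom (Submodule.mapQ _ _ (K.d i j).hom (modz_le z K i j))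
  shape i j h := by
    have hz : K.d i j = 0 := K.shape i j h
    apply ModuleCat.hom_ext
    apply Submodule.linearMap_qext
    apply LinearMap.ext
    intro y
    have hy : (K.d i j).hom y = 0 := by rw [hz]; rfl
    show ((zSMulRange z (K.X i)).mapQ (zSMulRange z (K.X j)) (K.d i j).hom (modz_le z K i j))
        ((zSMulRange z (K.X i)).mkQ y) = 0
    rw [Submodule.mkQ_apply, Submodule.mapQ_apply, hy, Submodule.Quotient.mk_zero]
  d_comp_d' i j k hij hjk := by
    apply ModuleCat.hom_ext
    apply Submodule.linearMap_qext
    apply LinearMap.ext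
    intro y
    have h0 : (K.d j k).hom ((K.d i j).hom y) = 0 := by
      have hdd := K.d_comp_d i j k
      calc (K.d j k).hom ((K.d i j).hom y) = (K.d i j ≫ K.d j k).hom y := rfl
        _ = (0 : K.X i ⟶ K.X k).hom y := by rw [hdd]
        _ = 0 := rfl
    show ((zSMulRange z (K.X j)).mapQ (zSMulRange z (K.X k)) (K.d j k).hom (modz_le z K j k))
        (((zSMulRange z (K.X i)).mapQ (zSMulRange z (K.X j)) (K.d i j).hom (modz_le z K i j))
          ((zSMulRange z (K.X i)).mkQ y)) = 0
    rw [Submodule.mkQ_apply, Submodule.mapQ_apply, Submodule.mapQ_apply, h0,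
      Submodule.Quotient.mk_zero]

/-- Multiplication by `z`, as a chain map `K ⟶ K`. -/
noncomputable def zSMulMap {R : Type*} [CommRing R] (z : R)
    (K : CochainComplex (ModuleCat R) ℤ) : K ⟶ K where
  f n := ModuleCat.ofHom (z • LinearMap.id : K.X n →ₗ[R] K.X n)
  comm' i j hij := by
    apply ModuleCat.hom_ext
    apply LinearMap.ext
    intro x
    show (K.d i j).hom ((z • LinearMap.id : K.X i →ₗ[R] K.X i) x)
        = (z • LinearMap.id : K.X j →ₗ[R] K.X j) ((K.d i j).hom x)
    simp

/-- The termwise quotient chain map `K ⟶ K/zK`. -/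
noncomputable def modzπ {R : Type*} [CommRing R] (z : R)
    (K : CochainComplex (ModuleCat R) ℤ) : K ⟶ modz z K where
  f n := ModuleCat.ofHom (zSMulRange z (K.X n)).mkQ
  comm' i j hij := by
    apply ModuleCat.hom_ext
    apply LinearMap.ext
    intro x
    show ((zSMulRange z (K.X i)).mapQ (zSMulRange z (K.X j)) (K.d i j).hom (modz_le z K i j))
        ((zSMulRange z (K.X i)).mkQ x) = (zSMulRange z (K.X j)).mkQ ((K.d i j).hom x)
    rw [Submodule.mkQ_apply, Submodule.mkQ_apply, Submodule.mapQ_apply]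



/-!
Multiplication by `z` gives a short exact sequence of complexes `0 → K → K → K/zK → 0`
(termwise exact because `z` is injective on each `Kⁿ`), on whose cohomology the first map acts
as multiplication by `z`. Exactness of the long exact sequence at `Hⁿ(K)` identifies the kernel
of `Hⁿ(K) → Hⁿ(K/zK)` with `z·Hⁿ(K)`. Since `z` is injective on `Hⁿ⁺¹(K)`, the connecting map
`Hⁿ(K/zK) → Hⁿ⁺¹(K)` vanishes, so `Hⁿ(K) → Hⁿ(K/zK)` is onto.
-/
theorem Submodule.bijective_liftQ_of_eq_ker {R M N : Type*} [Ring R] [AddCommGroup M]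
    [Module R M] [AddCommGroup N] [Module R N] (p : Submodule R M) (f : M →ₗ[R] N)
    (hp : p = LinearMap.ker f) (hf : Function.Surjective f) :
    Function.Bijective (p.liftQ f hp.le) := by
  refine ⟨LinearMap.ker_eq_bot.1 (p.ker_liftQ_eq_bot' f hp), ?_⟩
  rw [← LinearMap.range_eq_top, p.range_liftQ, LinearMap.range_eq_top]
  exact hf

namespace CategoryTheory.ShortComplex.ShortExact

variable {C ι : Type*} [Category C] [Abelian C] {c : ComplexShape ι}

theorem epi_homologyMap_g_of_mono_homologyMap_f {S : ShortComplex (HomologicalComplex C c)}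
    (hS : S.ShortExact) {i j : ι} (hij : c.Rel i j)
    [Mono (HomologicalComplex.homologyMap S.f j)] :
    Epi (HomologicalComplex.homologyMap S.g i) := by
  have hδ : hS.δ i j hij = 0 := (cancel_mono (HomologicalComplex.homologyMap S.f j)).1 <| by
    rw [hS.δ_comp, Limits.zero_comp]
  exact (hS.homology_exact₃ i j hij).epi_f hδ

end CategoryTheory.ShortComplex.ShortExact

theorem HomologicalComplex.homologyMap_smul {R C ι : Type*} [Semiring R] [Category C]
    [Preadditive C] [Linear R C] {c : ComplexShape ι} {K L : HomologicalComplex C c}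
    [∀ i, K.HasHomology i] [∀ i, L.HasHomology i] (r : R) (φ : K ⟶ L) (i : ι) :
    homologyMap (r • φ) i = r • homologyMap φ i := by
  have h : (shortComplexFunctor C c i).map (r • φ) = r • (shortComplexFunctor C c i).map φ := by
    ext <;> rfl
  rw [homologyMap, h, ShortComplex.homologyMap_smul]
  rfl

section modz

variable {R : Type*} [CommRing R] (z : R) (K : CochainComplex (ModuleCat R) ℤ)

theorem zSMulMap_eq_smul_id : zSMulMap z K = z • 𝟙 K := rfl

theorem homologyMap_zSMulMap_hom (n : ℤ) :
    (HomologicalComplex.homologyMap (zSMulMap z K) n).hom = z • LinearMap.id := by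
  rw [zSMulMap_eq_smul_id, HomologicalComplex.homologyMap_smul,
    HomologicalComplex.homologyMap_id]
  rfl

theorem zSMulMap_comp_modzπ : zSMulMap z K ≫ modzπ z K = 0 := by
  ext m x : 3
  exact (Submodule.Quotient.mk_eq_zero _).2 ⟨x, rfl⟩

noncomputable abbrev modzShortComplex : ShortComplex (CochainComplex (ModuleCat R) ℤ) :=
  ShortComplex.mk (zSMulMap z K) (modzπ z K) (zSMulMap_comp_modzπ z K)

theorem modzShortComplex_shortExact
    (hinj : ∀ n : ℤ, Function.Injective fun x : K.X n => z • x) :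
    (modzShortComplex z K).ShortExact := by
  refine HomologicalComplex.shortExact_of_degreewise_shortExact _ fun m => ?_
  refine ShortComplex.ShortExact.mk' ?_ ((ModuleCat.mono_iff_injective _).2 (hinj m))
    ((ModuleCat.epi_iff_surjective _).2 (Submodule.mkQ_surjective _))
  rw [ShortComplex.moduleCat_exact_iff]
  intro x hx
  exact (Submodule.Quotient.mk_eq_zero _).1 hx

end modz

theorem modz_homology_quotient_iso_general {R : Type*} [CommRing R] (z : R)
    (K : CochainComplex (ModuleCat R) ℤ)
    (hinj : ∀ n : ℤ, Function.Injective fun x : K.X n => z • x)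
    (hinjH : ∀ n : ℤ, Function.Injective fun x : K.homology n => z • x) :
    ∀ n : ℤ,
      ∃ h : LinearMap.range (z • (LinearMap.id : K.homology n →ₗ[R] K.homology n)) ≤
          LinearMap.ker (HomologicalComplex.homologyMap (modzπ z K) n).hom,
        Function.Bijective
          ⇑(Submodule.liftQ _ (HomologicalComplex.homologyMap (modzπ z K) n).hom h) := by
  intro n
  have hS := modzShortComplex_shortExact z K hinj
  have hker : LinearMap.range (z • LinearMap.id : K.homology n →ₗ[R] K.homology n) =
      LinearMap.ker (HomologicalComplex.homologyMap (modzπ z K) n).hom := by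
    rw [← homologyMap_zSMulMap_hom]
    exact (hS.homology_exact₂ n).moduleCat_range_eq_ker
  have : Mono (HomologicalComplex.homologyMap (zSMulMap z K) (n + 1)) := by
    refine (ModuleCat.mono_iff_injective _).2 ?_
    change Function.Injective (HomologicalComplex.homologyMap (zSMulMap z K) (n + 1)).hom
    rw [homologyMap_zSMulMap_hom]
    exact hinjH (n + 1)
  have hsurj : Function.Surjective (HomologicalComplex.homologyMap (modzπ z K) n).hom :=
    (ModuleCat.epi_iff_surjective _).1 (hS.epi_homologyMap_g_of_mono_homologyMap_f rfl)
  exact ⟨hker.le, Submodule.bijective_liftQ_of_eq_ker _ _ hker hsurj⟩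

/-- Let `K` be a bounded cochain complex of `R`-modules on which
multiplication by `z` is injective on each term and on each cohomology module.  Then for every
`n` the map `Hⁿ(K)/z·Hⁿ(K) → Hⁿ(K/zK)` induced by the termwise quotient chain map
`K ⟶ K/zK` is an isomorphism. -/
theorem modz_homology_quotient_iso {R : Type*} [CommRing R] (z : R)
    (K : CochainComplex (ModuleCat R) ℤ)
    (hbdd : ∃ a b : ℤ, ∀ n : ℤ, (n < a ∨ b < n) → Limits.IsZero (K.X n))
    (hinj : ∀ n : ℤ, Function.Injective fun x : K.X n => z • x)
    (hinjH : ∀ n : ℤ, Function.Injective fun x : K.homology n => z • x) :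
    ∀ n : ℤ,
      ∃ h : LinearMap.range (z • (LinearMap.id : K.homology n →ₗ[R] K.homology n)) ≤
          LinearMap.ker (HomologicalComplex.homologyMap (modzπ z K) n).hom,
        Function.Bijective
          ⇑(Submodule.liftQ _ (HomologicalComplex.homologyMap (modzπ z K) n).hom h) :=
  modz_homology_quotient_iso_general z K hinj hinjH
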